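/- Let N be an α,β-net in a finite-dimensional normed space X, {φ_i} a commuting retraction system on N with sup Lip(φ_i) = K, and suppose μ_m ∈ N with ‖μ_m‖ > Kβn satisfies φ_m(t) = μ_m for all t in some set A ⊆ N. Then every chain T from μ_m to a point t ∈ A avoids the ball B(0, βn): i.e., every point μ_p ∈ T satisfies ‖μ_p‖ > βn. -/

import Mathlib

open scoped NNReal

/-- Two indices `a < b` are consecutive in a chain when `φ (b-1) (μ b) = μ a`. -/
def chainRel {X : Type*} (φ : ℕ → X → X) (μ : ℕ → X) (a b : ℕ) : Prop :=
  a < b ∧ φ (b - 1) (μ b) = μ a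

/-- A chain is a finite sequence of indices, consecutive ones related by `chainRel`. -/
def IsChainSeq {X : Type*} (φ : ℕ → X → X) (μ : ℕ → X) (S : List ℕ) : Prop :=
  S.Chain' (chainRel φ μ)

/-!
Along a chain starting at `μ m`, each link `φ (b-1) (μ b) = μ a` with `m ≤ a ≤ b - 1` is
absorbed by `φ m`, so `φ m` sends every point of the chain to `μ m`. Since `φ m` fixes
`0 = μ 0` and is `K`-Lipschitz, `‖μ m‖ ≤ K ‖μ p‖` for every point `μ p` of the chain, which
forces `‖μ p‖ > βn` once `‖μ m‖ > Kβn`.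
-/

section RetractionChain

variable {X : Type*} {N : Set X} {φ : ℕ → X → X} {μ : ℕ → X} {m : ℕ}

theorem IsChainSeq.retract_eq_head (hμmem : ∀ i, μ i ∈ N) (hfix : φ m (μ m) = μ m)
    (habsorb : ∀ j, m ≤ j → ∀ p ∈ N, φ m (φ j p) = φ m p)
    {T : List ℕ} (hT : IsChainSeq φ μ T) (hhead : T.head? = some m) :
    ∀ p ∈ T, φ m (μ p) = μ m := by
  have hprop : ∀ p ∈ T, m ≤ p ∧ φ m (μ p) = μ m := by
    refine List.IsChain.induction _ T hT ?carries ?initial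
    case carries =>
      rintro a b ⟨hab, hlink⟩ ⟨hma, ha⟩
      refine ⟨hma.trans hab.le, ?_⟩
      rw [← habsorb (b - 1) (by omega) _ (hμmem b), hlink, ha]
    case initial =>
      intro hne
      rw [(List.head_eq_iff_head?_eq_some hne).mpr hhead]
      exact ⟨le_rfl, hfix⟩
  exact fun p hp => (hprop p hp).2

end RetractionChain

theorem LipschitzOnWith.norm_le_mul_of_map_zero {E F : Type*} [SeminormedAddCommGroup E]
    [SeminormedAddCommGroup F] {f : E → F} {K : ℝ≥0} {s : Set E}
    (hf : LipschitzOnWith K f s) (h0 : (0 : E) ∈ s) (hf0 : f 0 = 0) {x : E} (hx : x ∈ s) :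
    ‖f x‖ ≤ K * ‖x‖ := by
  simpa [hf0] using hf.norm_sub_le hx h0

theorem chain_avoids_ball_general {X : Type*} [NormedAddCommGroup X]
    (β : ℝ) (n : ℕ)
    (N : Set X)
    (μ : ℕ → X) (hμmem : ∀ i, μ i ∈ N) (hμ0 : μ 0 = 0)
    (φ : ℕ → X → X)
    (hretr : ∀ i j, j ≤ i → φ i (μ j) = μ j)
    (hcomm : ∀ i j, i ≤ j → ∀ p ∈ N, φ j (φ i p) = φ i p ∧ φ i (φ j p) = φ i p)
    (K : ℝ≥0) (hlip : ∀ i, LipschitzOnWith K (φ i) N)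
    (m : ℕ)
    (hnorm : (K : ℝ) * β * n < ‖μ m‖)
    (T : List ℕ) (hT : IsChainSeq φ μ T) (hhead : T.head? = some m) :
    ∀ p ∈ T, β * n < ‖μ p‖ := by
  intro p hp
  have hmap : φ m (μ p) = μ m :=
    hT.retract_eq_head hμmem (hretr m m le_rfl)
      (fun j hj q hq => (hcomm m j hj q hq).2) hhead p hp
  have hφ0 : φ m 0 = 0 := hμ0 ▸ hretr m 0 (Nat.zero_le m)
  have hbound : ‖μ m‖ ≤ K * ‖μ p‖ := by
    simpa [hmap] using (hlip m).norm_le_mul_of_map_zero (hμ0 ▸ hμmem 0) hφ0 (hμmem p)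
  by_contra! hsmall
  have : ‖μ m‖ ≤ K * β * n := calc
    ‖μ m‖ ≤ K * ‖μ p‖ := hbound
    _ ≤ K * (β * n) := by gcongr
    _ = K * β * n := (mul_assoc _ _ _).symm
  linarith

/-- if `‖μ m‖ > Kβn` and `φ m t = μ m` for all `t` in a set `A`, then
every chain from `μ m` to a point of `A` avoids the ball `B(0, βn)`: each of its
points `μ p` satisfies `‖μ p‖ > βn`. -/
theorem chain_avoids_ball {X : Type*} [NormedAddCommGroup X] [NormedSpace ℝ X]
    (β : ℝ) (hβ : 0 < β) (n : ℕ)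
    (N : Set X) (h0N : (0 : X) ∈ N)
    (μ : ℕ → X) (hμmem : ∀ i, μ i ∈ N) (hμ0 : μ 0 = 0)
    (hμinj : Function.Injective μ) (hμsurj : ∀ p ∈ N, ∃ i, μ i = p)
    (φ : ℕ → X → X)
    (hmaps : ∀ i, ∀ p ∈ N, ∃ j ≤ i, φ i p = μ j)
    (hretr : ∀ i j, j ≤ i → φ i (μ j) = μ j)
    (hcomm : ∀ i j, i ≤ j → ∀ p ∈ N, φ j (φ i p) = φ i p ∧ φ i (φ j p) = φ i p)
    (K : ℝ≥0) (hlip : ∀ i, LipschitzOnWith K (φ i) N)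
    (m : ℕ) (A : Set X) (hA : A ⊆ N)
    (hφm : ∀ t ∈ A, φ m t = μ m)
    (hnorm : (K : ℝ) * β * n < ‖μ m‖)
    (T : List ℕ) (hT : IsChainSeq φ μ T) (hhead : T.head? = some m)
    (a : ℕ) (hlast : T.getLast? = some a) (haA : μ a ∈ A) :
    ∀ p ∈ T, β * n < ‖μ p‖ :=
  chain_avoids_ball_general β n N μ hμmem hμ0 φ hretr hcomm K hlip m hnorm T hT hhead
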